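/- Let p : ℕ → [1,∞] satisfy limsup_{n→∞} p(n) < ∞. Then every x with Φ_p(x) < ∞ is a null sequence, i.e., ℓ^{p(·)} ⊆ c₀. -/

import Mathlib

/-
Eventually every exponent `p n` lies below a finite bound `q`. Since the `ℓ^a`-sum
`(t^a + s^a)^(1/a)` decreases in `a`, each step of the recursion beyond that point satisfies
`|||x|||_(k)^q + |x_{k+2}|^q ≤ |||x|||_(k+1)^q`. Telescoping, the tail of `∑ |x_n|^q` is bounded
by `Φ_p(x)^q < ∞`, so the series converges and its terms tend to zero.
-/

open scoped ENNReal

/-- `t ⊞_p s`: for `p < ∞`, `(t^p + s^p)^(1/p)`; for `p = ∞`, `max t s`. -/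
noncomputable def boxPlus (p : ℝ≥0∞) (t s : ℝ) : ℝ :=
  if p = ∞ then max t s else (t ^ p.toReal + s ^ p.toReal) ^ (1 / p.toReal)

/-- The recursively defined seminorms `|||x|||_(k)` (0-indexed). -/
noncomputable def seqNorm (p : ℕ → ℝ≥0∞) (x : ℕ → ℝ) : ℕ → ℝ
  | 0 => boxPlus (p 0) |x 0| |x 1|
  | k + 1 => boxPlus (p (k + 1)) (seqNorm p x k) |x (k + 2)|

/-- `Φ_p(x) = lim_k |||x|||_(k)`, as the supremum of the nondecreasing sequence. -/
noncomputable def Phi (p : ℕ → ℝ≥0∞) (x : ℕ → ℝ) : ℝ≥0∞ :=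
  ⨆ k, ENNReal.ofReal (seqNorm p x k)

/-- `x` is a bounded real sequence, i.e. `x ∈ ℓ^∞`. -/
def IsBddSeq (x : ℕ → ℝ) : Prop := ∃ M : ℝ, ∀ n, |x n| ≤ M

/-- Membership in the variable exponent space `ℓ^{p(·)}`. -/
def MemVLp (p : ℕ → ℝ≥0∞) (x : ℕ → ℝ) : Prop := IsBddSeq x ∧ Phi p x < ⊤

open Filter Topology Finset

lemma boxPlus_nonneg (p : ℝ≥0∞) {t s : ℝ} (ht : 0 ≤ t) (hs : 0 ≤ s) :
    0 ≤ boxPlus p t s := by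
  unfold boxPlus
  split
  · exact le_max_of_le_left ht
  · positivity

lemma seqNorm_nonneg (p : ℕ → ℝ≥0∞) (x : ℕ → ℝ) (k : ℕ) : 0 ≤ seqNorm p x k := by
  cases k with
  | zero => exact boxPlus_nonneg _ (abs_nonneg _) (abs_nonneg _)
  | succ k => exact boxPlus_nonneg _ (seqNorm_nonneg p x k) (abs_nonneg _)

lemma seqNorm_le_toReal_Phi {p : ℕ → ℝ≥0∞} {x : ℕ → ℝ} (h : Phi p x ≠ ⊤) (k : ℕ) :
    seqNorm p x k ≤ (Phi p x).toReal :=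
  (ENNReal.ofReal_le_iff_le_toReal h).1 (le_iSup (fun k ↦ ENNReal.ofReal (seqNorm p x k)) k)

lemma rpow_add_rpow_le_boxPlus_rpow {p : ℝ≥0∞} {q : ℝ} (hp : 0 < p.toReal) (hpq : p.toReal ≤ q)
    {t s : ℝ} (ht : 0 ≤ t) (hs : 0 ≤ s) :
    t ^ q + s ^ q ≤ boxPlus p t s ^ q := by
  have hq : 0 < q := hp.trans_le hpq
  have hsum : 0 ≤ t ^ q + s ^ q := by positivity
  rw [boxPlus, if_neg (ENNReal.toReal_pos_iff.1 hp).2.ne]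
  calc t ^ q + s ^ q = ((t ^ q + s ^ q) ^ (1 / q)) ^ q := by
        rw [one_div, Real.rpow_inv_rpow hsum hq.ne']
    _ ≤ _ := by gcongr; exact Real.rpow_add_rpow_le ht hs hp hpq

lemma sum_range_abs_rpow_le_seqNorm_rpow {p : ℕ → ℝ≥0∞} {q : ℝ} {N : ℕ}
    (hpq : ∀ n, N < n → 0 < (p n).toReal ∧ (p n).toReal ≤ q) (x : ℕ → ℝ) (m : ℕ) :
    ∑ i ∈ range m, |x (i + (N + 2))| ^ q ≤ seqNorm p x (N + m) ^ q := by
  induction m with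
  | zero => simpa using Real.rpow_nonneg (seqNorm_nonneg p x N) q
  | succ m ih =>
    obtain ⟨hp, hle⟩ := hpq (N + m + 1) (by omega)
    calc ∑ i ∈ range (m + 1), |x (i + (N + 2))| ^ q
        ≤ seqNorm p x (N + m) ^ q + |x (N + m + 2)| ^ q := by
          rw [sum_range_succ, show m + (N + 2) = N + m + 2 by ring]
          gcongr
      _ ≤ seqNorm p x (N + m + 1) ^ q :=
          rpow_add_rpow_le_boxPlus_rpow hp hle (seqNorm_nonneg p x _) (abs_nonneg _)

lemma tendsto_zero_of_summable_abs_rpow {x : ℕ → ℝ} {q : ℝ} (hq : 0 < q)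
    (h : Summable fun n ↦ |x n| ^ q) : Tendsto x atTop (𝓝 0) := by
  have hpow : Tendsto (fun n ↦ (|x n| ^ q) ^ q⁻¹) atTop (𝓝 ((0 : ℝ) ^ q⁻¹)) :=
    h.tendsto_atTop_zero.rpow_const (Or.inr (inv_nonneg.2 hq.le))
  rw [Real.zero_rpow (inv_ne_zero hq.ne')] at hpow
  simp only [Real.rpow_rpow_inv (abs_nonneg _) hq.ne'] at hpow
  exact (tendsto_zero_iff_abs_tendsto_zero x).2 hpow

theorem subset_c0_of_limsup_lt_top (p : ℕ → ℝ≥0∞) (hp : ∀ n, 1 ≤ p n)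
    (hlim : Filter.limsup p Filter.atTop < ⊤)
    (x : ℕ → ℝ) (hx : MemVLp p x) :
    Filter.Tendsto x Filter.atTop (nhds 0) := by
  obtain ⟨r, hlim_lt_r, -⟩ := ENNReal.lt_iff_exists_nnreal_btwn.1 hlim
  obtain ⟨N, hN⟩ := eventually_atTop.1 (eventually_lt_of_limsup_lt hlim_lt_r)
  have hpr : ∀ n, N < n → 0 < (p n).toReal ∧ (p n).toReal ≤ r := fun n hn ↦
    have hlt := hN n hn.le
    ⟨ENNReal.toReal_pos (zero_lt_one.trans_le (hp n)).ne' hlt.ne_top,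
      ENNReal.toReal_le_coe_of_le_coe hlt.le⟩
  have hr : (0 : ℝ) < r :=
    have hN1 := hpr (N + 1) N.lt_succ_self
    hN1.1.trans_le hN1.2
  have hPhi : Phi p x ≠ ⊤ := hx.2.ne
  have hsum : Summable fun i ↦ |x (i + (N + 2))| ^ (r : ℝ) :=
    summable_of_sum_range_le (c := (Phi p x).toReal ^ (r : ℝ)) (fun _ ↦ by positivity) fun m ↦
      (sum_range_abs_rpow_le_seqNorm_rpow hpr x m).trans <| by
        gcongr
        exacts [seqNorm_nonneg p x _, seqNorm_le_toReal_Phi hPhi _]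
  exact tendsto_zero_of_summable_abs_rpow hr ((summable_nat_add_iff (N + 2)).1 hsum)
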